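/- Let C = C(n) > 0 be the dimensional constant from the smallness lemma for the two-phase obstacle problem. Let u be a solution of the two-phase obstacle problem in an open set D ⊆ ℝⁿ, let x₀ ∈ D and r₀ > 0 with B_{r₀}(x₀) ⊆ D. If x₀ ∈ closure({u > 0}), then sup_{∂B_r(x₀)} u⁺ ≥ λ₊ C r² for all 0 < r < r₀ (and analogously for u⁻ and λ₋ if x₀ ∈ closure({u < 0})). Consequently, if x₀ ∉ interior(Λ_u), then sup_{∂B_r(x₀)} |u| ≥ min(λ₊, λ₋) C r² for all 0 < r < r₀. -/

import Mathlib

open MeasureTheory Metric Set Filter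

noncomputable section

/-- Euclidean space of dimension `n+1`; coordinate `0` plays the role of `x₁`. -/
abbrev En (n : ℕ) := EuclideanSpace ℝ (Fin (n+1))

/-- The open half-space `ℝⁿ₊ = {x : x₁ > 0}`. -/
def halfSpace (n : ℕ) : Set (En n) := {x | 0 < x 0}

/-- The hyperplane `Π = {x : x₁ = 0}`. -/
def hyperplane (n : ℕ) : Set (En n) := {x | x 0 = 0}

/-- `|x'|`, the norm of the tangential part `x' = (x₂, …, xₙ)` of `x`. -/
def normPrime {n : ℕ} (x : En n) : ℝ := Real.sqrt (∑ i, if i = 0 then 0 else (x i)^2)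

/-- `u` is a solution of the two-phase obstacle problem `Δu = λ₊χ_{u>0} − λ₋χ_{u<0}`
in the open set `D`:  `u ∈ C¹(D)` and the equation holds weakly. -/
def IsTPSol {n : ℕ} (lp lm : ℝ) (D : Set (En n)) (u : En n → ℝ) : Prop :=
  ContDiffOn ℝ 1 u D ∧
  ∀ φ : En n → ℝ, ContDiff ℝ (⊤ : ℕ∞) φ → HasCompactSupport φ → tsupport φ ⊆ D →
    (∫ x in D, (inner ℝ (gradient u x) (gradient φ x) : ℝ)) =
      - ∫ x in D, ((if 0 < u x then lp else 0) - (if u x < 0 then lm else 0)) * φ x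

/-- `Ω⁺_u = {x ∈ D : u(x) > 0}`. -/
def OmegaPlus {n : ℕ} (D : Set (En n)) (u : En n → ℝ) : Set (En n) := {x ∈ D | 0 < u x}

/-- `Ω⁻_u = {x ∈ D : u(x) < 0}`. -/
def OmegaMinus {n : ℕ} (D : Set (En n)) (u : En n → ℝ) : Set (En n) := {x ∈ D | u x < 0}

/-- `Λ_u = {x ∈ D : u(x) = 0, ∇u(x) = 0}`. -/
def LambdaSet {n : ℕ} (D : Set (En n)) (u : En n → ℝ) : Set (En n) :=
  {x ∈ D | u x = 0 ∧ gradient u x = 0}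

/-- The free boundary `Γ_u = (∂Ω⁺_u ∪ ∂Ω⁻_u) ∩ D`. -/
def freeBoundary {n : ℕ} (D : Set (En n)) (u : En n → ℝ) : Set (En n) :=
  (frontier (OmegaPlus D u) ∪ frontier (OmegaMinus D u)) ∩ D

/-- The half-ball `B_r⁺ = B_r ∩ ℝⁿ₊`. -/
def Bplus (n : ℕ) (r : ℝ) : Set (En n) := Metric.ball 0 r ∩ halfSpace n

/-- The set `B_r ∩ {x₁ ≥ 0}`, domain for "C¹ up to `Π ∩ B_r`". -/
def BplusBar (n : ℕ) (r : ℝ) : Set (En n) := Metric.ball 0 r ∩ {x | 0 ≤ x 0}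

/-- `sup_S |u|`. -/
def supAbs {n : ℕ} (u : En n → ℝ) (S : Set (En n)) : ℝ := sSup ((fun x => |u x|) '' S)

/-- The embedding `x' ↦ (0, x')` of `ℝ^n` onto the hyperplane `Π ⊂ ℝ^{n+1}`. -/
def emb {n : ℕ} (x' : EuclideanSpace ℝ (Fin n)) : En n := WithLp.toLp 2 (Fin.cons (0 : ℝ) (WithLp.ofLp x') : Fin (n+1) → ℝ)

/-- A modulus of continuity: nonnegative, nondecreasing on `[0,1]`, tending to `0` at `0⁺`. -/
def IsModulus (ω : ℝ → ℝ) : Prop :=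
  (∀ s, 0 ≤ ω s) ∧ MonotoneOn ω (Set.Icc 0 1) ∧
    Filter.Tendsto ω (nhdsWithin 0 (Set.Ioi 0)) (nhds 0)

/-- A Dini modulus of continuity: a modulus with `∫₀¹ ω(s)/s ds < ∞`. -/
def IsDiniModulus (ω : ℝ → ℝ) : Prop :=
  IsModulus ω ∧ IntegrableOn (fun s => ω s / s) (Set.Ioc 0 1)

/-- `f` is `C^{2,Dini}` on the unit ball with modulus `ω`, and
`f(0) = 0`, `∇f(0) = 0`, `D²f(0) = 0`. -/
def C2DiniVanishing {n : ℕ} (f : EuclideanSpace ℝ (Fin n) → ℝ) (ω : ℝ → ℝ) : Prop :=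
  ContDiffOn ℝ 2 f (Metric.ball 0 1) ∧
  (∀ x ∈ Metric.ball (0 : EuclideanSpace ℝ (Fin n)) 1,
    ∀ y ∈ Metric.ball (0 : EuclideanSpace ℝ (Fin n)) 1,
    ‖iteratedFDeriv ℝ 2 f x - iteratedFDeriv ℝ 2 f y‖ ≤ ω ‖x - y‖) ∧
  f 0 = 0 ∧ fderiv ℝ f 0 = 0 ∧ iteratedFDeriv ℝ 2 f 0 = 0

/-- The Laplacian `Δφ(x) = ∑ᵢ ∂²φ/∂xᵢ²(x)`. -/
def lap {n : ℕ} (φ : En n → ℝ) (x : En n) : ℝ :=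
  ∑ i, fderiv ℝ (fun y => fderiv ℝ φ y (EuclideanSpace.single i 1)) x (EuclideanSpace.single i 1)

/- ----------------- Auxiliary lemmas ----------------- -/

open InnerProductSpace
open scoped RealInnerProductSpace

section GradAux

variable {F : Type*} [NormedAddCommGroup F] [InnerProductSpace ℝ F] [CompleteSpace F]

lemma toDual_comp_smul_id (g : F) (s : ℝ) :
    ((toDual ℝ F) g).comp (s • ContinuousLinearMap.id ℝ F) = (toDual ℝ F) (s • g) := by
  ext y
  simp [toDual_apply_apply, real_inner_smul_left, real_inner_smul_right]

lemma hasGradientAt_affine_comp (f : F → ℝ) (g c x : F) (s : ℝ)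
    (hf : HasGradientAt f g (c + s • x)) :
    HasGradientAt (fun y => f (c + s • y)) (s • g) x := by
  have hA : HasFDerivAt (fun y : F => c + s • y) (s • ContinuousLinearMap.id ℝ F) x :=
    ((hasFDerivAt_id x).const_smul s).const_add c
  have h := (hf.hasFDerivAt).comp x hA
  rw [toDual_comp_smul_id] at h
  exact h

lemma hasGradientAt_const_mul (f : F → ℝ) (g x : F) (c : ℝ)
    (hf : HasGradientAt f g x) :
    HasGradientAt (fun y => c * f y) (c • g) x := by
  have h := (hf.hasFDerivAt).const_smul c
  have h2 : c • (toDual ℝ F) g = (toDual ℝ F) (c • g) := (map_smul _ _ _).symm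
  rw [h2] at h
  have h3 := h.hasGradientAt
  simp only [LinearIsometryEquiv.symm_apply_apply] at h3
  exact h3

lemma gradient_zero_of_nmem_tsupport {f : F → ℝ} {x : F} (h : x ∉ tsupport f) :
    gradient f x = 0 := by
  have : fderiv ℝ f x = 0 := by
    by_contra hne
    exact h (support_fderiv_subset ℝ (Function.mem_support.2 hne))
  rw [gradient, this, map_zero]

end GradAux

/-- Rescaling a solution: `v(x) = u(x₀ + r x)/r²` solves the problem in the unit ball. -/
lemma rescaled_sol (n : ℕ) (lp lm : ℝ) (D : Set (En n)) (hD : IsOpen D)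
    (u : En n → ℝ) (hsol : IsTPSol lp lm D u) (x₀ : En n) (r : ℝ) (hr : 0 < r)
    (hball : Metric.closedBall x₀ r ⊆ D) :
    IsTPSol lp lm (Metric.ball 0 1) (fun x => (r^2)⁻¹ * u (x₀ + r • x)) ∧
    ContinuousOn (fun x => (r^2)⁻¹ * u (x₀ + r • x)) (Metric.closedBall 0 1) := by
  have hrne : r ≠ 0 := ne_of_gt hr
  have hr2 : (0:ℝ) < (r^2)⁻¹ := by positivity
  have hAmaps : ∀ x ∈ Metric.closedBall (0:En n) 1, x₀ + r • x ∈ Metric.closedBall x₀ r := by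
    intro x hx
    have hd : dist (x₀ + r • x) x₀ = r * ‖x‖ := by
      simp [dist_eq_norm, norm_smul, abs_of_pos hr]
    rw [Metric.mem_closedBall, hd]
    have hx1 : ‖x‖ ≤ 1 := by simpa [dist_eq_norm] using hx
    nlinarith
  have hAD : ∀ x ∈ Metric.closedBall (0:En n) 1, x₀ + r • x ∈ D :=
    fun x hx => hball (hAmaps x hx)
  have hud : ∀ y ∈ D, DifferentiableAt ℝ u y := fun y hy =>
    (hsol.1.differentiableOn one_ne_zero).differentiableAt (hD.mem_nhds hy)
  have hAcd : ContDiff ℝ (⊤ : ℕ∞) (fun x : En n => x₀ + r • x) :=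
    contDiff_const.add (contDiff_id.const_smul r)
  have hTA : ∀ x : En n, (-(r⁻¹ • x₀)) + r⁻¹ • (x₀ + r • x) = x := by
    intro x
    simp [smul_add, smul_smul, inv_mul_cancel₀ hrne]
  have hAT : ∀ y : En n, x₀ + r • ((-(r⁻¹ • x₀)) + r⁻¹ • y) = y := by
    intro y
    simp [smul_add, smul_smul, mul_inv_cancel₀ hrne, smul_neg]
  have hcont : ContinuousOn (fun x => (r^2)⁻¹ * u (x₀ + r • x)) (Metric.closedBall 0 1) := by
    apply ContinuousOn.mul continuousOn_const
    exact hsol.1.continuousOn.comp hAcd.continuous.continuousOn hAD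
  refine ⟨⟨?_, ?_⟩, hcont⟩
  · -- ContDiffOn
    have h1 : ContDiffOn ℝ 1 (fun x : En n => u (x₀ + r • x)) (Metric.ball 0 1) := by
      apply hsol.1.comp ((hAcd.of_le (by simp)).contDiffOn)
      intro x hx
      exact hAD x (Metric.ball_subset_closedBall hx)
    have h2 := h1.const_smul ((r^2)⁻¹)
    simpa [smul_eq_mul] using h2
  · -- weak formulation
    intro φ hφ hφc hφsupp
    have hψcd : ContDiff ℝ (⊤ : ℕ∞) (fun y => φ (-(r⁻¹ • x₀) + r⁻¹ • y)) :=
      hφ.comp (contDiff_const.add (contDiff_id.const_smul r⁻¹))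
    have hsupp : Function.support (fun y => φ (-(r⁻¹ • x₀) + r⁻¹ • y)) ⊆
        (fun x : En n => x₀ + r • x) '' tsupport φ := by
      intro y hy
      exact ⟨(-(r⁻¹ • x₀)) + r⁻¹ • y, subset_tsupport φ hy, hAT y⟩
    have himgcpt : IsCompact ((fun x : En n => x₀ + r • x) '' tsupport φ) :=
      hφc.image hAcd.continuous
    have hψts : tsupport (fun y => φ (-(r⁻¹ • x₀) + r⁻¹ • y)) ⊆ (fun x : En n => x₀ + r • x) '' tsupport φ :=
      closure_minimal hsupp himgcpt.isClosed
    have hψc : HasCompactSupport (fun y => φ (-(r⁻¹ • x₀) + r⁻¹ • y)) :=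
      himgcpt.of_isClosed_subset (isClosed_tsupport _) hψts
    have hψD : tsupport (fun y => φ (-(r⁻¹ • x₀) + r⁻¹ • y)) ⊆ D := by
      intro y hy
      obtain ⟨x, hx, rfl⟩ := hψts hy
      exact hAD x (Metric.ball_subset_closedBall (hφsupp hx))
    have hweak := hsol.2 (fun y => φ (-(r⁻¹ • x₀) + r⁻¹ • y)) hψcd hψc hψD
    -- gradient of ψ
    have hgradψ : ∀ y : En n, gradient (fun y => φ (-(r⁻¹ • x₀) + r⁻¹ • y)) y
        = r⁻¹ • gradient φ ((-(r⁻¹ • x₀)) + r⁻¹ • y) := by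
      intro y
      have hd : HasGradientAt φ (gradient φ ((-(r⁻¹ • x₀)) + r⁻¹ • y))
          ((-(r⁻¹ • x₀)) + r⁻¹ • y) :=
        ((hφ.differentiable (by simp)) _).hasGradientAt
      exact (hasGradientAt_affine_comp φ _ _ y r⁻¹ hd).gradient
    -- gradient of v at good points
    have hgradv : ∀ x : En n, x₀ + r • x ∈ D →
        gradient (fun x => (r^2)⁻¹ * u (x₀ + r • x)) x = (r^2)⁻¹ • r • gradient u (x₀ + r • x) := by
      intro x hx
      have h1 : HasGradientAt u (gradient u (x₀ + r • x)) (x₀ + r • x) :=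
        (hud _ hx).hasGradientAt
      have h2 := hasGradientAt_affine_comp u _ x₀ x r h1
      exact (hasGradientAt_const_mul _ _ _ ((r^2)⁻¹) h2).gradient
    -- vanishing outside D
    have hF0 : ∀ y, y ∉ D → (fun y => (inner ℝ (gradient u y) (gradient (fun y => φ (-(r⁻¹ • x₀) + r⁻¹ • y)) y) : ℝ)) y = 0 := by
      intro y hy
      have hyt : y ∉ tsupport (fun y => φ (-(r⁻¹ • x₀) + r⁻¹ • y)) := fun h => hy (hψD h)
      simp [gradient_zero_of_nmem_tsupport hyt]
    have hG0 : ∀ y, y ∉ D → (fun y => ((if 0 < u y then lp else 0) - (if u y < 0 then lm else 0)) * (fun y => φ (-(r⁻¹ • x₀) + r⁻¹ • y)) y) y = 0 := by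
      intro y hy
      have hyt : y ∉ tsupport (fun y => φ (-(r⁻¹ • x₀) + r⁻¹ • y)) := fun h => hy (hψD h)
      simp [image_eq_zero_of_notMem_tsupport hyt]
    -- change of variables
    have hcv : ∀ H : En n → ℝ, (∫ y, H y) = (r ^ (n+1)) * ∫ x, H (x₀ + r • x) := by
      intro H
      have h1 : (∫ x, H (x₀ + r • x)) = ∫ x, (fun z => H (x₀ + z)) (r • x) := rfl
      rw [h1, MeasureTheory.Measure.integral_comp_smul volume (fun z => H (x₀ + z)) r]
      rw [MeasureTheory.integral_add_left_eq_self]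
      rw [finrank_euclideanSpace_fin, abs_of_pos (by positivity), smul_eq_mul,
        ← mul_assoc, mul_inv_cancel₀ (by positivity), one_mul]
    -- F ∘ A on and off the ball
    have hFA1 : ∀ x ∈ Metric.ball (0:En n) 1,
        (fun y => (inner ℝ (gradient u y) (gradient (fun y => φ (-(r⁻¹ • x₀) + r⁻¹ • y)) y) : ℝ)) (x₀ + r • x) = (inner ℝ (gradient (fun x => (r^2)⁻¹ * u (x₀ + r • x)) x) (gradient φ x) : ℝ) := by
      intro x hx
      have hxD : x₀ + r • x ∈ D := hAD x (Metric.ball_subset_closedBall hx)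
      beta_reduce
      rw [hgradψ (x₀ + r • x), hgradv x hxD, hTA x]
      rw [real_inner_smul_right, real_inner_smul_left, real_inner_smul_left]
      field_simp
    have hFA2 : ∀ x : En n, x ∉ Metric.ball (0:En n) 1 → (fun y => (inner ℝ (gradient u y) (gradient (fun y => φ (-(r⁻¹ • x₀) + r⁻¹ • y)) y) : ℝ)) (x₀ + r • x) = 0 := by
      intro x hx
      have hxt : x ∉ tsupport φ := fun h => hx (hφsupp h)
      beta_reduce
      rw [hgradψ (x₀ + r • x), hTA x, gradient_zero_of_nmem_tsupport hxt]
      simp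
    -- G ∘ A
    have hGA1 : ∀ x : En n, (fun y => ((if 0 < u y then lp else 0) - (if u y < 0 then lm else 0)) * (fun y => φ (-(r⁻¹ • x₀) + r⁻¹ • y)) y) (x₀ + r • x) = (fun x => ((if 0 < (fun x => (r^2)⁻¹ * u (x₀ + r • x)) x then lp else 0) - (if (fun x => (r^2)⁻¹ * u (x₀ + r • x)) x < 0 then lm else 0)) * φ x) x := by
      intro x
      have hψA : φ ((-(r⁻¹ • x₀)) + r⁻¹ • (x₀ + r • x)) = φ x := by rw [hTA x]
      have hiff1 : (0 < u (x₀ + r • x)) ↔ (0 < (r^2)⁻¹ * u (x₀ + r • x)) := by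
        constructor
        · intro h; positivity
        · intro h; nlinarith
      have hiff2 : (u (x₀ + r • x) < 0) ↔ ((r^2)⁻¹ * u (x₀ + r • x) < 0) := by
        constructor
        · intro h; nlinarith
        · intro h; nlinarith
      simp only [hψA, hiff1, hiff2]
    have hGA2 : ∀ x : En n, x ∉ Metric.ball (0:En n) 1 → (fun y => ((if 0 < u y then lp else 0) - (if u y < 0 then lm else 0)) * (fun y => φ (-(r⁻¹ • x₀) + r⁻¹ • y)) y) (x₀ + r • x) = 0 := by
      intro x hx
      have hxt : x ∉ tsupport φ := fun h => hx (hφsupp h)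
      rw [hGA1 x]
      simp [image_eq_zero_of_notMem_tsupport hxt]
    -- assemble
    have e1 : (∫ y in D, (fun y => (inner ℝ (gradient u y) (gradient (fun y => φ (-(r⁻¹ • x₀) + r⁻¹ • y)) y) : ℝ)) y)
        = (r ^ (n+1)) * ∫ x in Metric.ball (0:En n) 1,
            (inner ℝ (gradient (fun x => (r^2)⁻¹ * u (x₀ + r • x)) x) (gradient φ x) : ℝ) := by
      calc (∫ y in D, (fun y => (inner ℝ (gradient u y) (gradient (fun y => φ (-(r⁻¹ • x₀) + r⁻¹ • y)) y) : ℝ)) y) = ∫ y, (fun y => (inner ℝ (gradient u y) (gradient (fun y => φ (-(r⁻¹ • x₀) + r⁻¹ • y)) y) : ℝ)) y :=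
            setIntegral_eq_integral_of_forall_compl_eq_zero hF0
        _ = (r ^ (n+1)) * ∫ x, (fun y => (inner ℝ (gradient u y) (gradient (fun y => φ (-(r⁻¹ • x₀) + r⁻¹ • y)) y) : ℝ)) (x₀ + r • x) := hcv (fun y => (inner ℝ (gradient u y) (gradient (fun y => φ (-(r⁻¹ • x₀) + r⁻¹ • y)) y) : ℝ))
        _ = (r ^ (n+1)) * ∫ x in Metric.ball (0:En n) 1, (fun y => (inner ℝ (gradient u y) (gradient (fun y => φ (-(r⁻¹ • x₀) + r⁻¹ • y)) y) : ℝ)) (x₀ + r • x) := by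
            rw [setIntegral_eq_integral_of_forall_compl_eq_zero hFA2]
        _ = (r ^ (n+1)) * ∫ x in Metric.ball (0:En n) 1,
              (inner ℝ (gradient (fun x => (r^2)⁻¹ * u (x₀ + r • x)) x) (gradient φ x) : ℝ) := by
            congr 1
            exact setIntegral_congr_fun measurableSet_ball hFA1
    have e2 : (∫ y in D, (fun y => ((if 0 < u y then lp else 0) - (if u y < 0 then lm else 0)) * (fun y => φ (-(r⁻¹ • x₀) + r⁻¹ • y)) y) y)
        = (r ^ (n+1)) * ∫ x in Metric.ball (0:En n) 1, (fun x => ((if 0 < (fun x => (r^2)⁻¹ * u (x₀ + r • x)) x then lp else 0) - (if (fun x => (r^2)⁻¹ * u (x₀ + r • x)) x < 0 then lm else 0)) * φ x) x := by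
      calc (∫ y in D, (fun y => ((if 0 < u y then lp else 0) - (if u y < 0 then lm else 0)) * (fun y => φ (-(r⁻¹ • x₀) + r⁻¹ • y)) y) y) = ∫ y, (fun y => ((if 0 < u y then lp else 0) - (if u y < 0 then lm else 0)) * (fun y => φ (-(r⁻¹ • x₀) + r⁻¹ • y)) y) y :=
            setIntegral_eq_integral_of_forall_compl_eq_zero hG0
        _ = (r ^ (n+1)) * ∫ x, (fun y => ((if 0 < u y then lp else 0) - (if u y < 0 then lm else 0)) * (fun y => φ (-(r⁻¹ • x₀) + r⁻¹ • y)) y) (x₀ + r • x) := hcv (fun y => ((if 0 < u y then lp else 0) - (if u y < 0 then lm else 0)) * (fun y => φ (-(r⁻¹ • x₀) + r⁻¹ • y)) y)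
        _ = (r ^ (n+1)) * ∫ x in Metric.ball (0:En n) 1, (fun y => ((if 0 < u y then lp else 0) - (if u y < 0 then lm else 0)) * (fun y => φ (-(r⁻¹ • x₀) + r⁻¹ • y)) y) (x₀ + r • x) := by
            rw [setIntegral_eq_integral_of_forall_compl_eq_zero hGA2]
        _ = (r ^ (n+1)) * ∫ x in Metric.ball (0:En n) 1, (fun x => ((if 0 < (fun x => (r^2)⁻¹ * u (x₀ + r • x)) x then lp else 0) - (if (fun x => (r^2)⁻¹ * u (x₀ + r • x)) x < 0 then lm else 0)) * φ x) x := by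
            congr 1
            exact setIntegral_congr_fun measurableSet_ball (fun x _ => hGA1 x)
    have hrpow : (r:ℝ) ^ (n+1) ≠ 0 := by positivity
    have h3 : (r ^ (n+1)) * (∫ x in Metric.ball (0:En n) 1,
          (inner ℝ (gradient (fun x => (r^2)⁻¹ * u (x₀ + r • x)) x) (gradient φ x) : ℝ))
        = (r ^ (n+1)) * -(∫ x in Metric.ball (0:En n) 1, (fun x => ((if 0 < (fun x => (r^2)⁻¹ * u (x₀ + r • x)) x then lp else 0) - (if (fun x => (r^2)⁻¹ * u (x₀ + r • x)) x < 0 then lm else 0)) * φ x) x) := by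
      rw [← e1, hweak, e2]
      ring
    exact mul_left_cancel₀ hrpow h3

lemma max_mul_aux (c t : ℝ) (hc : 0 ≤ c) : max (c * t) 0 = c * max t 0 := by
  rw [mul_max_of_nonneg _ _ hc, mul_zero]

/-- **Non-degeneracy corollary.** Let `C > 0` be a constant for which the smallness lemma holds.
If `u` solves the two-phase obstacle problem in `D`, `B_{r₀}(x₀) ⊆ D`, and
`x₀ ∈ closure {u > 0}`, then `sup_{∂B_r(x₀)} u⁺ ≥ λ₊ C r²` for `0 < r < r₀` (analogously for
`u⁻`); and if `x₀ ∉ interior Λ_u` then `sup_{∂B_r(x₀)} |u| ≥ min(λ₊,λ₋) C r²`. -/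
theorem nondegeneracy_corollary (n : ℕ) (hn : 1 ≤ n) (C : ℝ) (hC : 0 < C)
    (hsmall : ∀ (lp lm : ℝ), 0 < lp → 0 < lm → ∀ u : En n → ℝ,
      IsTPSol lp lm (Metric.ball 0 1) u → ContinuousOn u (Metric.closedBall 0 1) →
      (sSup ((fun x => max (u x) 0) '' Metric.sphere (0:En n) 1) < lp * C →
        (0:En n) ∉ closure {x ∈ Metric.ball (0:En n) 1 | 0 < u x}) ∧
      (sSup ((fun x => max (-u x) 0) '' Metric.sphere (0:En n) 1) < lm * C →
        (0:En n) ∉ closure {x ∈ Metric.ball (0:En n) 1 | u x < 0}))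
    (lp lm : ℝ) (hlp : 0 < lp) (hlm : 0 < lm)
    (D : Set (En n)) (hD : IsOpen D) (u : En n → ℝ) (hsol : IsTPSol lp lm D u)
    (x₀ : En n) (r₀ : ℝ) (hr₀ : 0 < r₀) (hball : Metric.ball x₀ r₀ ⊆ D) :
    (x₀ ∈ closure {x ∈ D | 0 < u x} →
      ∀ r : ℝ, 0 < r → r < r₀ →
        lp * C * r^2 ≤ sSup ((fun x => max (u x) 0) '' Metric.sphere x₀ r)) ∧
    (x₀ ∈ closure {x ∈ D | u x < 0} →
      ∀ r : ℝ, 0 < r → r < r₀ →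
        lm * C * r^2 ≤ sSup ((fun x => max (-u x) 0) '' Metric.sphere x₀ r)) ∧
    (x₀ ∉ interior (LambdaSet D u) →
      ∀ r : ℝ, 0 < r → r < r₀ →
        min lp lm * C * r^2 ≤ sSup ((fun x => |u x|) '' Metric.sphere x₀ r)) := by
  haveI : Nontrivial (En n) := by
    refine ⟨EuclideanSpace.single 0 1, 0, ?_⟩
    intro h
    have := congrArg (fun v : En n => v 0) h
    simp at this
  have hsph : ∀ r : ℝ, 0 < r → (Metric.sphere x₀ r).Nonempty :=
    fun r hr => NormedSpace.sphere_nonempty.2 hr.le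
  have hsphD : ∀ r : ℝ, r < r₀ → Metric.sphere x₀ r ⊆ D := by
    intro r hrlt
    exact (Metric.sphere_subset_closedBall.trans
      (Metric.closedBall_subset_ball hrlt)).trans hball
  have huc : ContinuousOn u D := hsol.1.continuousOn
  -- shared nondegeneracy for + and -
  have key : ∀ r : ℝ, 0 < r → r < r₀ →
      (x₀ ∈ closure {x ∈ D | 0 < u x} →
        lp * C * r^2 ≤ sSup ((fun x => max (u x) 0) '' Metric.sphere x₀ r)) ∧
      (x₀ ∈ closure {x ∈ D | u x < 0} →
        lm * C * r^2 ≤ sSup ((fun x => max (-u x) 0) '' Metric.sphere x₀ r)) := by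
    intro r hrpos hrlt
    have hrne : r ≠ 0 := ne_of_gt hrpos
    have hr2 : (0:ℝ) < (r^2)⁻¹ := by positivity
    have hcb : Metric.closedBall x₀ r ⊆ D :=
      (Metric.closedBall_subset_ball hrlt).trans hball
    obtain ⟨hvsol, hvcont⟩ := rescaled_sol n lp lm D hD u hsol x₀ r hrpos hcb
    have hsm := hsmall lp lm hlp hlm (fun x => (r^2)⁻¹ * u (x₀ + r • x)) hvsol hvcont
    have hAT' : ∀ y : En n, x₀ + r • (r⁻¹ • (y - x₀)) = y := by
      intro y
      simp [smul_smul, mul_inv_cancel₀ hrne]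
    have hAsph : ∀ x ∈ Metric.sphere (0:En n) 1, x₀ + r • x ∈ Metric.sphere x₀ r := by
      intro x hx
      rw [mem_sphere_iff_norm, add_sub_cancel_left, norm_smul, Real.norm_eq_abs,
        abs_of_pos hrpos, mem_sphere_zero_iff_norm.1 hx, mul_one]
    have hTsph : ∀ y ∈ Metric.sphere x₀ r, r⁻¹ • (y - x₀) ∈ Metric.sphere (0:En n) 1 := by
      intro y hy
      rw [mem_sphere_zero_iff_norm, norm_smul, Real.norm_eq_abs,
        abs_of_pos (inv_pos.2 hrpos), mem_sphere_iff_norm.1 hy, inv_mul_cancel₀ hrne]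
    -- closeness transfer
    have hclosure : ∀ (P : ℝ → Prop), x₀ ∈ closure {x ∈ D | P (u x)} →
        (0:En n) ∈ closure {x ∈ Metric.ball (0:En n) 1 | P (u (x₀ + r • x))} := by
      intro P hx₀
      rw [Metric.mem_closure_iff]
      intro ε hε
      obtain ⟨y, hy, hdy⟩ := Metric.mem_closure_iff.1 hx₀ (r * min ε 1)
        (by positivity)
      have hnorm : ‖r⁻¹ • (y - x₀)‖ = r⁻¹ * dist x₀ y := by
        rw [norm_smul, Real.norm_eq_abs, abs_of_pos (inv_pos.2 hrpos),
          dist_eq_norm, norm_sub_rev x₀ y]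
      have hlt : ‖r⁻¹ • (y - x₀)‖ < min ε 1 := by
        rw [hnorm]
        calc r⁻¹ * dist x₀ y < r⁻¹ * (r * min ε 1) :=
              mul_lt_mul_of_pos_left hdy (inv_pos.2 hrpos)
          _ = min ε 1 := by field_simp
      refine ⟨r⁻¹ • (y - x₀), ⟨?_, ?_⟩, ?_⟩
      · exact mem_ball_zero_iff.2 (lt_of_lt_of_le hlt (min_le_right _ _))
      · rw [hAT' y]; exact hy.2
      · rw [dist_zero_left]
        exact lt_of_lt_of_le hlt (min_le_left _ _)
    constructor
    · -- plus part
      intro hx₀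
      have hset1 : {x | x ∈ Metric.ball (0:En n) 1 ∧ 0 < (r^2)⁻¹ * u (x₀ + r • x)}
          = {x | x ∈ Metric.ball (0:En n) 1 ∧ 0 < u (x₀ + r • x)} := by
        ext x
        simp only [Set.mem_setOf_eq, and_congr_right_iff]
        intro _
        constructor
        · intro h; nlinarith
        · intro h; positivity
      have hcl : (0:En n) ∈ closure {x | x ∈ Metric.ball (0:En n) 1 ∧
          0 < (r^2)⁻¹ * u (x₀ + r • x)} := by
        rw [hset1]
        exact hclosure (fun t => 0 < t) hx₀
      have hle : lp * C ≤ sSup ((fun x => max ((fun x => (r^2)⁻¹ * u (x₀ + r • x)) x) 0) '' Metric.sphere (0:En n) 1) := by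
        by_contra hlt2
        exact (hsm.1 (not_le.1 hlt2)) hcl
      have himg : (fun x => max ((fun x => (r^2)⁻¹ * u (x₀ + r • x)) x) 0) '' Metric.sphere (0:En n) 1
          = (fun t => (r^2)⁻¹ * t) '' ((fun x => max (u x) 0) '' Metric.sphere x₀ r) := by
        rw [Set.image_image]
        ext t
        constructor
        · rintro ⟨x, hx, rfl⟩
          exact ⟨x₀ + r • x, hAsph x hx, (max_mul_aux _ _ hr2.le).symm⟩
        · rintro ⟨y, hy, rfl⟩
          refine ⟨r⁻¹ • (y - x₀), hTsph y hy, ?_⟩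
          beta_reduce
          rw [hAT' y, max_mul_aux _ _ hr2.le]
      have hbdd : BddAbove ((fun x => max (u x) 0) '' Metric.sphere x₀ r) :=
        (isCompact_sphere x₀ r).bddAbove_image
          ((huc.mono (hsphD r hrlt)).sup continuousOn_const)
      have hmap := Monotone.map_csSup_of_continuousAt
        (f := fun t : ℝ => (r^2)⁻¹ * t)
        (continuous_const.mul continuous_id).continuousAt
        (monotone_mul_left_of_nonneg hr2.le)
        ((hsph r hrpos).image _) hbdd
      rw [himg, ← hmap] at hle
      have h3 : ((r^2)⁻¹ * sSup ((fun x => max (u x) 0) '' Metric.sphere x₀ r)) * r^2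
          = sSup ((fun x => max (u x) 0) '' Metric.sphere x₀ r) := by
        field_simp
      have h2 := mul_le_mul_of_nonneg_right hle (sq_nonneg r)
      rw [h3] at h2
      linarith
    · -- minus part
      intro hx₀
      have hset1 : {x | x ∈ Metric.ball (0:En n) 1 ∧ (r^2)⁻¹ * u (x₀ + r • x) < 0}
          = {x | x ∈ Metric.ball (0:En n) 1 ∧ u (x₀ + r • x) < 0} := by
        ext x
        simp only [Set.mem_setOf_eq, and_congr_right_iff]
        intro _
        constructor
        · intro h; nlinarith
        · intro h; nlinarith
      have hcl : (0:En n) ∈ closure {x | x ∈ Metric.ball (0:En n) 1 ∧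
          (r^2)⁻¹ * u (x₀ + r • x) < 0} := by
        rw [hset1]
        exact hclosure (fun t => t < 0) hx₀
      have hle : lm * C ≤ sSup ((fun x => max (-((fun x => (r^2)⁻¹ * u (x₀ + r • x)) x)) 0) '' Metric.sphere (0:En n) 1) := by
        by_contra hlt2
        exact (hsm.2 (not_le.1 hlt2)) hcl
      have himg : (fun x => max (-((fun x => (r^2)⁻¹ * u (x₀ + r • x)) x)) 0) '' Metric.sphere (0:En n) 1
          = (fun t => (r^2)⁻¹ * t) '' ((fun x => max (-u x) 0) '' Metric.sphere x₀ r) := by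
        rw [Set.image_image]
        ext t
        constructor
        · rintro ⟨x, hx, rfl⟩
          refine ⟨x₀ + r • x, hAsph x hx, ?_⟩
          beta_reduce
          rw [← max_mul_aux _ _ hr2.le, mul_neg]
        · rintro ⟨y, hy, rfl⟩
          refine ⟨r⁻¹ • (y - x₀), hTsph y hy, ?_⟩
          beta_reduce
          rw [hAT' y, ← mul_neg, max_mul_aux _ _ hr2.le]
      have hbdd : BddAbove ((fun x => max (-u x) 0) '' Metric.sphere x₀ r) :=
        (isCompact_sphere x₀ r).bddAbove_image
          (((huc.mono (hsphD r hrlt)).neg).sup continuousOn_const)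
      have hmap := Monotone.map_csSup_of_continuousAt
        (f := fun t : ℝ => (r^2)⁻¹ * t)
        (continuous_const.mul continuous_id).continuousAt
        (monotone_mul_left_of_nonneg hr2.le)
        ((hsph r hrpos).image _) hbdd
      rw [himg, ← hmap] at hle
      have h3 : ((r^2)⁻¹ * sSup ((fun x => max (-u x) 0) '' Metric.sphere x₀ r)) * r^2
          = sSup ((fun x => max (-u x) 0) '' Metric.sphere x₀ r) := by
        field_simp
      have h2 := mul_le_mul_of_nonneg_right hle (sq_nonneg r)
      rw [h3] at h2
      linarith
  refine ⟨fun h r hr hr' => (key r hr hr').1 h, fun h r hr hr' => (key r hr hr').2 h, ?_⟩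
  -- third part
  intro hnotint r hrpos hrlt
  have hbddA : BddAbove ((fun x => |u x|) '' Metric.sphere x₀ r) :=
    (isCompact_sphere x₀ r).bddAbove_image (huc.mono (hsphD r hrlt)).abs
  by_cases h1 : x₀ ∈ closure {x ∈ D | 0 < u x}
  · have hP := (key r hrpos hrlt).1 h1
    have hmono : sSup ((fun x => max (u x) 0) '' Metric.sphere x₀ r)
        ≤ sSup ((fun x => |u x|) '' Metric.sphere x₀ r) := by
      apply csSup_le (((hsph r hrpos)).image _)
      rintro t ⟨x, hx, rfl⟩
      exact le_trans (max_le (le_abs_self _) (abs_nonneg _)) (le_csSup hbddA ⟨x, hx, rfl⟩)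
    have : min lp lm * C * r^2 ≤ lp * C * r^2 :=
      mul_le_mul_of_nonneg_right
        (mul_le_mul_of_nonneg_right (min_le_left lp lm) hC.le) (sq_nonneg r)
    linarith
  by_cases h2 : x₀ ∈ closure {x ∈ D | u x < 0}
  · have hP := (key r hrpos hrlt).2 h2
    have hmono : sSup ((fun x => max (-u x) 0) '' Metric.sphere x₀ r)
        ≤ sSup ((fun x => |u x|) '' Metric.sphere x₀ r) := by
      apply csSup_le (((hsph r hrpos)).image _)
      rintro t ⟨x, hx, rfl⟩
      exact le_trans (max_le (neg_le_abs _) (abs_nonneg _)) (le_csSup hbddA ⟨x, hx, rfl⟩)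
    have : min lp lm * C * r^2 ≤ lm * C * r^2 :=
      mul_le_mul_of_nonneg_right
        (mul_le_mul_of_nonneg_right (min_le_right lp lm) hC.le) (sq_nonneg r)
    linarith
  -- contradiction: x₀ is in the interior of the zero set
  exfalso
  rw [Metric.mem_closure_iff] at h1 h2
  push_neg at h1 h2
  obtain ⟨ε₁, hε₁, H1⟩ := h1
  obtain ⟨ε₂, hε₂, H2⟩ := h2
  set δ := min (min ε₁ ε₂) r₀ with hδdef
  have hδ : 0 < δ := lt_min (lt_min hε₁ hε₂) hr₀
  have hsubD : Metric.ball x₀ δ ⊆ D := by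
    intro y hy
    exact hball (Metric.ball_subset_ball (min_le_right _ _) hy)
  have hu0 : ∀ y ∈ Metric.ball x₀ δ, u y = 0 := by
    intro y hy
    have hyD : y ∈ D := hsubD hy
    have hd : dist x₀ y < δ := by rwa [dist_comm, ← Metric.mem_ball]
    by_contra hne
    rcases lt_or_gt_of_ne hne with hlt | hgt
    · have hge := H2 y ⟨hyD, hlt⟩
      have hle2 : δ ≤ ε₂ := (min_le_left _ _).trans (min_le_right _ _)
      linarith
    · have hge := H1 y ⟨hyD, hgt⟩
      have hle1 : δ ≤ ε₁ := (min_le_left _ _).trans (min_le_left _ _)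
      linarith
  have hgrad0 : ∀ y ∈ Metric.ball x₀ δ, gradient u y = 0 := by
    intro y hy
    have hev : u =ᶠ[nhds y] (fun _ => (0:ℝ)) :=
      Filter.eventuallyEq_of_mem (Metric.isOpen_ball.mem_nhds hy) hu0
    rw [hev.gradient_eq, gradient_fun_const]
  have hsub : Metric.ball x₀ δ ⊆ LambdaSet D u :=
    fun y hy => ⟨hsubD hy, hu0 y hy, hgrad0 y hy⟩
  exact hnotint (mem_interior.2 ⟨Metric.ball x₀ δ, hsub, Metric.isOpen_ball,
    Metric.mem_ball_self hδ⟩)
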